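/- Let C be an almost affine code of dimension k and length n. Then for all 1 ≤ j ≤ k and 1 ≤ i ≤ n: d_j(C) = min{ i : k_i(C) ≥ j } and k_i(C) = max{ j : d_j(C) ≤ i }, relating the generalized Hamming weights and the dimension/length profile of C. -/
import Mathlib

/-- The projection (puncturing) of a block code `C ⊆ F^n` to the coordinate set `X`. -/
def projC {F : Type*} [DecidableEq F] {n : ℕ} (C : Finset (Fin n → F)) (X : Finset (Fin n)) :
    Finset ({ i // i ∈ X } → F) :=
  C.image (fun c i => c i.1)

/-- `C ⊆ F^n` is an almost affine code of length `n` and dimension `k`: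
`|C| = |F|^k` and every projection has cardinality a power of `|F|`. -/
def IsAlmostAffineCode {F : Type*} [Fintype F] [DecidableEq F] (n k : ℕ)
    (C : Finset (Fin n → F)) : Prop :=
  C.card = Fintype.card F ^ k ∧
    ∀ X : Finset (Fin n), ∃ s : ℕ, (projC C X).card = Fintype.card F ^ s

/-- The `ct`-support of a word `c`. -/
def suppW {F : Type*} [DecidableEq F] {n : ℕ} (c ct : Fin n → F) : Finset (Fin n) :=
  Finset.univ.filter (fun i => c i ≠ ct i)

/-- `C(X, ct)`: the codewords of `C` agreeing with `ct` on `X`. -/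
def agreeOn {F : Type*} [DecidableEq F] {n : ℕ} (C : Finset (Fin n → F))
    (X : Finset (Fin n)) (ct : Fin n → F) : Finset (Fin n → F) :=
  C.filter (fun w => ∀ i ∈ X, w i = ct i)

/-- The `ct`-support of a code `D`. -/
def suppCode {F : Type*} [DecidableEq F] {n : ℕ} (D : Finset (Fin n → F)) (ct : Fin n → F) :
    Finset (Fin n) :=
  D.biUnion (fun w => suppW w ct)

/-- The `i`-th entry of the dimension/length profile of `C`: the maximal dimension of an
almost affine subcode of `C` whose support has cardinality at most `i`. -/
noncomputable def dlProfile {F : Type*} [Fintype F] [DecidableEq F] {n : ℕ}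
    (C : Finset (Fin n → F)) (i : ℕ) : ℕ :=
  sSup {d : ℕ | ∃ (D : Finset (Fin n → F)) (ct : Fin n → F),
    D ⊆ C ∧ IsAlmostAffineCode n d D ∧ ct ∈ D ∧ (suppCode D ct).card ≤ i}

set_option linter.unusedSectionVars false
set_option linter.unusedTactic false
set_option linter.unreachableTactic false

section Helpers
variable {F : Type*} [Fintype F] [DecidableEq F] {n : ℕ}

/-- restriction map -/
def res (X : Finset (Fin n)) (c : Fin n → F) : { i // i ∈ X } → F := fun i => c i.1

lemma projC_eq (C : Finset (Fin n → F)) (X : Finset (Fin n)) :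
    projC C X = C.image (res X) := rfl

lemma res_eq_iff (X : Finset (Fin n)) (c c' : Fin n → F) :
    res X c = res X c' ↔ ∀ i ∈ X, c i = c' i := by
  constructor
  · intro h i hi
    exact congrFun h ⟨i, hi⟩
  · intro h
    funext i
    exact h i.1 i.2

variable {C : Finset (Fin n → F)} {k : ℕ} (hF : 1 < Fintype.card F)
  (hCk : C.card = Fintype.card F ^ k)
  {r : Finset (Fin n) → ℕ}
  (hr : ∀ X, (projC C X).card = Fintype.card F ^ r X)

include hF hCk hr

lemma r_le_k (X : Finset (Fin n)) : r X ≤ k := by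
  have h1 : (projC C X).card ≤ C.card := Finset.card_image_le
  rw [hr, hCk] at h1
  exact (Nat.pow_le_pow_iff_right hF).1 h1

lemma r_univ : r (Finset.univ : Finset (Fin n)) = k := by
  have : (projC C Finset.univ).card = C.card := by
    rw [projC_eq]
    apply Finset.card_image_of_injective
    intro c c' h
    funext i
    exact congrFun h ⟨i, Finset.mem_univ i⟩
  rw [hr, hCk] at this
  exact Nat.pow_right_injective hF this

lemma r_mono {X Y : Finset (Fin n)} (hXY : X ⊆ Y) : r X ≤ r Y := by
  have himg : projC C X = (projC C Y).image (fun f i => f ⟨i.1, hXY i.2⟩) := by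
    rw [projC_eq, projC_eq, Finset.image_image]
    rfl
  have h1 : (projC C X).card ≤ (projC C Y).card := by
    rw [himg]; exact Finset.card_image_le
  rw [hr, hr] at h1
  exact (Nat.pow_le_pow_iff_right hF).1 h1

lemma r_insert_le (x : Fin n) (X : Finset (Fin n)) : r (insert x X) ≤ r X + 1 := by
  have h1 : (projC C (insert x X)).card ≤ ((projC C X) ×ˢ (Finset.univ : Finset F)).card := by
    apply Finset.card_le_card_of_injOn
      (fun f => (fun i => f ⟨i.1, Finset.mem_insert_of_mem i.2⟩, f ⟨x, Finset.mem_insert_self x X⟩))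
    · intro f hf
      rw [projC_eq] at hf ⊢
      obtain ⟨c, hc, rfl⟩ := Finset.mem_image.1 hf
      exact Finset.mem_product.2 ⟨Finset.mem_image_of_mem _ hc, Finset.mem_univ _⟩
    · intro f _ g _ h
      obtain ⟨h1, h2⟩ := Prod.mk.injEq .. ▸ h
      funext i
      rcases Finset.mem_insert.1 i.2 with hi | hi
      · have := h2
        convert this <;> exact (Subtype.ext hi)
      · exact congrFun h1 ⟨i.1, hi⟩
  rw [Finset.card_product, Finset.card_univ, hr, hr, ← pow_succ] at h1
  exact (Nat.pow_le_pow_iff_right hF).1 h1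

end Helpers

lemma all_eq_of_sum_eq_le {α : Type*} {P : Finset α} {f : α → ℕ} {L : ℕ}
    (hle : ∀ p ∈ P, L ≤ f p) (hsum : ∑ p ∈ P, f p = P.card * L) :
    ∀ p ∈ P, f p = L := by
  by_contra h
  push_neg at h
  obtain ⟨p0, hp0, hne⟩ := h
  have hlt : P.card * L < ∑ p ∈ P, f p := by
    calc P.card * L = ∑ _p ∈ P, L := by rw [Finset.sum_const, smul_eq_mul]
    _ < ∑ p ∈ P, f p := Finset.sum_lt_sum hle ⟨p0, hp0, lt_of_le_of_ne (hle p0 hp0) (Ne.symm hne)⟩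
  omega

lemma all_eq_of_sum_eq_ge {α : Type*} {P : Finset α} {f : α → ℕ} {L : ℕ}
    (hle : ∀ p ∈ P, f p ≤ L) (hsum : ∑ p ∈ P, f p = P.card * L) :
    ∀ p ∈ P, f p = L := by
  by_contra h
  push_neg at h
  obtain ⟨p0, hp0, hne⟩ := h
  have hlt : ∑ p ∈ P, f p < P.card * L := by
    calc ∑ p ∈ P, f p < ∑ _p ∈ P, L :=
      Finset.sum_lt_sum hle ⟨p0, hp0, lt_of_le_of_ne (hle p0 hp0) hne⟩
    _ = P.card * L := by rw [Finset.sum_const, smul_eq_mul]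
  omega
section Fiber
variable {F : Type*} [Fintype F] [DecidableEq F] {n : ℕ}
variable {C : Finset (Fin n → F)} {k : ℕ} (hF : 1 < Fintype.card F)
  (hCk : C.card = Fintype.card F ^ k)
  {r : Finset (Fin n) → ℕ}
  (hr : ∀ X, (projC C X).card = Fintype.card F ^ r X)

include hF hCk hr

lemma fiber_card : ∀ (X : Finset (Fin n)) (ct : Fin n → F), ct ∈ C →
    (agreeOn C X ct).card = Fintype.card F ^ (k - r X) := by
  set q := Fintype.card F with hq
  suffices H : ∀ m (X : Finset (Fin n)), Xᶜ.card ≤ m → ∀ ct ∈ C,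
      (agreeOn C X ct).card = q ^ (k - r X) by
    intro X ct hct; exact H (Xᶜ.card) X le_rfl ct hct
  intro m
  induction m with
  | zero =>
    intro X hX ct hct
    have hXu : X = Finset.univ := by
      have h0 : Xᶜ = ∅ := Finset.card_eq_zero.1 (Nat.le_zero.1 hX)
      have := congrArg (·ᶜ) h0
      simpa using this
    subst hXu
    have hsing : agreeOn C Finset.univ ct = {ct} := by
      ext w
      simp only [agreeOn, Finset.mem_filter, Finset.mem_singleton]
      constructor
      · rintro ⟨hw, h⟩; funext i; exact h i (Finset.mem_univ i)
      · rintro rfl; exact ⟨hct, fun i _ => rfl⟩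
    rw [hsing, Finset.card_singleton, r_univ hF hCk hr, Nat.sub_self, pow_zero]
  | succ m ih =>
    intro X hX ct hct
    rcases Nat.lt_or_ge Xᶜ.card (m+1) with h | h
    · exact ih X (Nat.lt_succ_iff.1 h) ct hct
    have hcard : Xᶜ.card = m + 1 := le_antisymm hX h
    obtain ⟨x, hx⟩ := Finset.card_pos.1 (by omega : 0 < Xᶜ.card)
    set Y := insert x X with hY
    have hYc : Yᶜ.card ≤ m := by
      rw [hY, Finset.compl_insert, Finset.card_erase_of_mem hx, hcard]
      omega
    have hst : r X ≤ r Y := r_mono hF hCk hr (Finset.subset_insert x X)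
    have hts : r Y ≤ r X + 1 := r_insert_le hF hCk hr x X
    have hrYk : r Y ≤ k := r_le_k hF hCk hr Y
    have hrXk : r X ≤ k := r_le_k hF hCk hr X
    -- lower bound on fibers
    have hlow : ∀ c ∈ C, q ^ (k - r Y) ≤ (agreeOn C X c).card := by
      intro c hc
      rw [← ih Y hYc c hc]
      apply Finset.card_le_card
      intro w hw
      simp only [agreeOn, Finset.mem_filter] at hw ⊢
      exact ⟨hw.1, fun i hi => hw.2 i (Finset.mem_insert_of_mem hi)⟩
    -- upper bound on fibers
    have hhigh : ∀ c ∈ C, (agreeOn C X c).card ≤ q * q ^ (k - r Y) := by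
      intro c hc
      have hdec : (agreeOn C X c).card = ∑ a ∈ (Finset.univ : Finset F),
          ((agreeOn C X c).filter (fun w => w x = a)).card :=
        Finset.card_eq_sum_card_fiberwise (fun w _ => Finset.mem_univ _)
      have hbl : ∀ a : F, ((agreeOn C X c).filter (fun w => w x = a)).card ≤ q ^ (k - r Y) := by
        intro a
        rcases Finset.eq_empty_or_nonempty ((agreeOn C X c).filter (fun w => w x = a)) with
          he | ⟨w, hw⟩
        · rw [he, Finset.card_empty]; exact Nat.zero_le _
        · simp only [agreeOn, Finset.mem_filter] at hw
          obtain ⟨⟨hwC, hwX⟩, hwx⟩ := hw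
          have hblock : (agreeOn C X c).filter (fun w' => w' x = a) = agreeOn C Y w := by
            ext w'
            simp only [agreeOn, Finset.mem_filter, hY]
            constructor
            · rintro ⟨⟨hw'C, hw'X⟩, hw'x⟩
              refine ⟨hw'C, fun i hi => ?_⟩
              rcases Finset.mem_insert.1 hi with rfl | hi
              · rw [hw'x, hwx]
              · rw [hw'X i hi, hwX i hi]
            · rintro ⟨hw'C, hw'Y⟩
              refine ⟨⟨hw'C, fun i hi => ?_⟩, ?_⟩
              · rw [hw'Y i (Finset.mem_insert_of_mem hi), hwX i hi]
              · rw [hw'Y x (Finset.mem_insert_self x X), hwx]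
          rw [hblock, ih Y hYc w hwC]
      calc (agreeOn C X c).card
          = ∑ a ∈ (Finset.univ : Finset F),
            ((agreeOn C X c).filter (fun w => w x = a)).card := hdec
        _ ≤ ∑ _a ∈ (Finset.univ : Finset F), q ^ (k - r Y) :=
            Finset.sum_le_sum (fun a _ => hbl a)
        _ = q * q ^ (k - r Y) := by rw [Finset.sum_const, smul_eq_mul, Finset.card_univ]
    -- fibers over projections
    have hsum : ∑ p ∈ projC C X, (C.filter (fun w => res X w = p)).card = C.card :=
      (Finset.card_eq_sum_card_fiberwise (fun c hc => Finset.mem_image_of_mem _ hc)).symm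
    have hfibeq : ∀ c ∈ C, C.filter (fun w => res X w = res X c) = agreeOn C X c := by
      intro c hc
      ext w
      simp only [agreeOn, Finset.mem_filter, res_eq_iff]
    have hPcard : (projC C X).card = q ^ r X := hr X
    have hfibL : ∀ p ∈ projC C X, (C.filter (fun w => res X w = p)).card = q ^ (k - r X) := by
      have hqk : (projC C X).card * q ^ (k - r X) = C.card := by
        rw [hPcard, hCk, ← pow_add]
        congr 1
        omega
      rcases eq_or_lt_of_le hst with heq | hlt
      · -- r X = r Y : use lower bound
        apply all_eq_of_sum_eq_le _ (by rw [hsum, hqk])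
        intro p hp
        rw [projC_eq] at hp
        obtain ⟨c, hc, rfl⟩ := Finset.mem_image.1 hp
        rw [hfibeq c hc]
        have := hlow c hc
        rwa [← heq] at this
      · -- r Y = r X + 1 : use upper bound
        have hYX : r Y = r X + 1 := by omega
        apply all_eq_of_sum_eq_ge _ (by rw [hsum, hqk])
        intro p hp
        rw [projC_eq] at hp
        obtain ⟨c, hc, rfl⟩ := Finset.mem_image.1 hp
        rw [hfibeq c hc]
        have h2 := hhigh c hc
        have h3 : q * q ^ (k - r Y) = q ^ (k - r X) := by
          rw [← pow_succ']
          congr 1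
          omega
        rwa [h3] at h2
    have := hfibL (res X ct) (Finset.mem_image_of_mem _ hct)
    rwa [hfibeq ct hct] at this

end Fiber
section Chunk2
variable {F : Type*} [Fintype F] [DecidableEq F] {n : ℕ}
variable {C : Finset (Fin n → F)} {k : ℕ} (hF : 1 < Fintype.card F)
  (hCk : C.card = Fintype.card F ^ k)
  {r : Finset (Fin n) → ℕ}
  (hr : ∀ X, (projC C X).card = Fintype.card F ^ r X)

include hF hCk hr

lemma r_empty : r (∅ : Finset (Fin n)) = 0 := by
  have hC0 : C.Nonempty := by
    rw [← Finset.card_pos, hCk]; exact pow_pos (lt_trans zero_lt_one hF) k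
  obtain ⟨c, hc⟩ := hC0
  have h1 : projC C ∅ = {res ∅ c} := by
    apply Finset.eq_singleton_iff_unique_mem.2
    refine ⟨Finset.mem_image_of_mem _ hc, ?_⟩
    intro f _
    funext i
    exact absurd i.2 (Finset.notMem_empty _)
  have := hr (∅ : Finset (Fin n))
  rw [h1, Finset.card_singleton] at this
  have h2 : Fintype.card F ^ (0:ℕ) = Fintype.card F ^ r ∅ := by rw [pow_zero]; exact this
  exact (Nat.pow_right_injective hF h2).symm

lemma agreeOn_AA (X : Finset (Fin n)) (ct : Fin n → F) (hct : ct ∈ C) :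
    IsAlmostAffineCode n (k - r X) (agreeOn C X ct) := by
  set q := Fintype.card F with hq
  refine ⟨fiber_card hF hCk hr X ct hct, ?_⟩
  intro Y
  refine ⟨r (X ∪ Y) - r X, ?_⟩
  set D := agreeOn C X ct with hD
  have hDcard : D.card = q ^ (k - r X) := fiber_card hF hCk hr X ct hct
  have hdec : D.card = ∑ p ∈ projC D Y, (D.filter (fun w => res Y w = p)).card :=
    Finset.card_eq_sum_card_fiberwise (fun c hc => Finset.mem_image_of_mem _ hc)
  have hfib : ∀ p ∈ projC D Y, (D.filter (fun w => res Y w = p)).card = q ^ (k - r (X ∪ Y)) := by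
    intro p hp
    rw [projC_eq] at hp
    obtain ⟨w, hw, rfl⟩ := Finset.mem_image.1 hp
    have hwD := hw
    rw [hD] at hw
    simp only [agreeOn, Finset.mem_filter] at hw
    obtain ⟨hwC, hwX⟩ := hw
    have hblock : D.filter (fun w' => res Y w' = res Y w) = agreeOn C (X ∪ Y) w := by
      ext w'
      simp only [hD, agreeOn, Finset.mem_filter, res_eq_iff]
      constructor
      · rintro ⟨⟨hw'C, hw'X⟩, hw'Y⟩
        refine ⟨hw'C, fun i hi => ?_⟩
        rcases Finset.mem_union.1 hi with hi | hi
        · rw [hw'X i hi, hwX i hi]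
        · exact hw'Y i hi
      · rintro ⟨hw'C, hw'U⟩
        refine ⟨⟨hw'C, fun i hi => ?_⟩, fun i hi => ?_⟩
        · rw [hw'U i (Finset.mem_union_left Y hi), hwX i hi]
        · exact hw'U i (Finset.mem_union_right X hi)
    rw [hblock]
    exact fiber_card hF hCk hr (X ∪ Y) w hwC
  have hsum : D.card = (projC D Y).card * q ^ (k - r (X ∪ Y)) := by
    rw [hdec, Finset.sum_congr rfl hfib, Finset.sum_const, smul_eq_mul]
  have h1 : r X ≤ r (X ∪ Y) := r_mono hF hCk hr Finset.subset_union_left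
  have h2 : r (X ∪ Y) ≤ k := r_le_k hF hCk hr (X ∪ Y)
  have h3 : q ^ (r (X ∪ Y) - r X) * q ^ (k - r (X ∪ Y)) = q ^ (k - r X) := by
    rw [← pow_add]; congr 1; omega
  have h4 : (projC D Y).card * q ^ (k - r (X ∪ Y)) =
      q ^ (r (X ∪ Y) - r X) * q ^ (k - r (X ∪ Y)) := by
    rw [← hsum, hDcard, h3]
  exact Nat.eq_of_mul_eq_mul_right (pow_pos (lt_trans zero_lt_one hF) _) h4

omit hF hCk hr

lemma suppCode_agree_subset (X : Finset (Fin n)) (ct : Fin n → F) :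
    suppCode (agreeOn C X ct) ct ⊆ Xᶜ := by
  intro i hi
  rw [suppCode, Finset.mem_biUnion] at hi
  obtain ⟨w, hw, hiw⟩ := hi
  simp only [agreeOn, Finset.mem_filter] at hw
  simp only [suppW, Finset.mem_filter] at hiw
  rw [Finset.mem_compl]
  intro hiX
  exact hiw.2 (hw.2 i hiX)

lemma subcode_subset_agree {D : Finset (Fin n → F)} (hDC : D ⊆ C) {ct : Fin n → F}
    (hct : ct ∈ D) : D ⊆ agreeOn C (suppCode D ct)ᶜ ct := by
  intro w hw
  simp only [agreeOn, Finset.mem_filter]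
  refine ⟨hDC hw, fun i hi => ?_⟩
  rw [Finset.mem_compl] at hi
  by_contra hne
  exact hi (Finset.mem_biUnion.2 ⟨w, hw, Finset.mem_filter.2 ⟨Finset.mem_univ i, hne⟩⟩)

include hF hCk hr

lemma exists_exact {j : ℕ} (hj1 : 1 ≤ j) (hjk : j ≤ k) :
    ∀ (Y : Finset (Fin n)), r Yᶜ ≤ k - j → ∃ X, X ⊆ Y ∧ r Xᶜ + j = k := by
  suffices H : ∀ m (Y : Finset (Fin n)), Y.card ≤ m → r Yᶜ ≤ k - j →
      ∃ X, X ⊆ Y ∧ r Xᶜ + j = k by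
    intro Y hY; exact H Y.card Y le_rfl hY
  intro m
  induction m with
  | zero =>
    intro Y hY hle
    have : Y = ∅ := Finset.card_eq_zero.1 (Nat.le_zero.1 hY)
    subst this
    rw [Finset.compl_empty, r_univ hF hCk hr] at hle
    omega
  | succ m ih =>
    intro Y hY hle
    rcases eq_or_lt_of_le hle with heq | hlt
    · exact ⟨Y, subset_rfl, by omega⟩
    rcases Y.eq_empty_or_nonempty with rfl | ⟨y, hy⟩
    · rw [Finset.compl_empty, r_univ hF hCk hr] at hlt
      omega
    have hcomp : (Y.erase y)ᶜ = insert y Yᶜ := by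
      rw [Finset.compl_erase]
    have hr1 : r (Y.erase y)ᶜ ≤ k - j := by
      rw [hcomp]
      have := r_insert_le hF hCk hr y Yᶜ
      omega
    have hcard : (Y.erase y).card ≤ m := by
      rw [Finset.card_erase_of_mem hy]
      have := Finset.card_pos.2 ⟨y, hy⟩
      omega
    obtain ⟨X, hXY, hX⟩ := ih (Y.erase y) hcard hr1
    exact ⟨X, hXY.trans (Finset.erase_subset y Y), hX⟩

end Chunk2
section Chunk3
variable {F : Type*} [Fintype F] [DecidableEq F] {n : ℕ}

def Tset (C : Finset (Fin n → F)) (i : ℕ) : Set ℕ :=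
  {d : ℕ | ∃ (D : Finset (Fin n → F)) (ct : Fin n → F),
    D ⊆ C ∧ IsAlmostAffineCode n d D ∧ ct ∈ D ∧ (suppCode D ct).card ≤ i}

variable {C : Finset (Fin n → F)} {k : ℕ} (hF : 1 < Fintype.card F)
  (hCk : C.card = Fintype.card F ^ k)
  {r : Finset (Fin n) → ℕ}
  (hr : ∀ X, (projC C X).card = Fintype.card F ^ r X)

include hF hCk

lemma zero_mem_Tset (i : ℕ) : 0 ∈ Tset C i := by
  have hC0 : C.Nonempty := by
    rw [← Finset.card_pos, hCk]; exact pow_pos (lt_trans zero_lt_one hF) k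
  obtain ⟨ct, hct⟩ := hC0
  refine ⟨{ct}, ct, Finset.singleton_subset_iff.2 hct,
    ⟨by rw [Finset.card_singleton, pow_zero], ?_⟩, Finset.mem_singleton_self ct, ?_⟩
  · intro X
    refine ⟨0, ?_⟩
    rw [projC, Finset.image_singleton, Finset.card_singleton, pow_zero]
  · have hemp : suppCode {ct} ct = ∅ := by
      simp [suppCode, suppW]
    rw [hemp, Finset.card_empty]
    exact Nat.zero_le _

lemma Tset_bdd (i : ℕ) : ∀ d ∈ Tset C i, d ≤ k := by
  rintro d ⟨D, ct, hDC, ⟨hDcard, _⟩, hct, _⟩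
  have h1 : D.card ≤ C.card := Finset.card_le_card hDC
  rw [hDcard, hCk] at h1
  exact (Nat.pow_le_pow_iff_right hF).1 h1

lemma Tset_bddAbove (i : ℕ) : BddAbove (Tset C i) :=
  ⟨k, fun d hd => Tset_bdd hF hCk i d hd⟩

lemma dlProfile_mono {i i' : ℕ} (h : i ≤ i') : dlProfile C i ≤ dlProfile C i' :=
  csSup_le_csSup (Tset_bddAbove hF hCk i') ⟨0, zero_mem_Tset hF hCk i⟩
    (fun _d ⟨D, ct, h1, h2, h3, h4⟩ => ⟨D, ct, h1, h2, h3, h4.trans h⟩)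

include hr

lemma j_mem_Tset {j i : ℕ} (hj1 : 1 ≤ j) (hjk : j ≤ k)
    (d : ℕ → ℕ)
    (hd : ∀ j, d j = sInf {m : ℕ | ∃ X : Finset (Fin n), X.card = m ∧ r Xᶜ + j = k})
    (hdi : d j ≤ i) : j ∈ Tset C i := by
  have hne : {m : ℕ | ∃ X : Finset (Fin n), X.card = m ∧ r Xᶜ + j = k}.Nonempty := by
    obtain ⟨X, _, hX⟩ := exists_exact hF hCk hr hj1 hjk Finset.univ
      (by rw [Finset.compl_univ, r_empty hF hCk hr]; omega)
    exact ⟨X.card, X, rfl, hX⟩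
  have hmem := Nat.sInf_mem hne
  rw [← hd j] at hmem
  obtain ⟨X, hXcard, hXr⟩ := hmem
  have hC0 : C.Nonempty := by
    rw [← Finset.card_pos, hCk]; exact pow_pos (lt_trans zero_lt_one hF) k
  obtain ⟨ct, hct⟩ := hC0
  have hAA := agreeOn_AA hF hCk hr Xᶜ ct hct
  have hkj : k - r Xᶜ = j := by omega
  rw [hkj] at hAA
  refine ⟨agreeOn C Xᶜ ct, ct, Finset.filter_subset _ _, hAA, ?_, ?_⟩
  · exact Finset.mem_filter.2 ⟨hct, fun i _ => rfl⟩
  · have hsub := suppCode_agree_subset (C := C) Xᶜ ct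
    rw [compl_compl] at hsub
    calc (suppCode (agreeOn C Xᶜ ct) ct).card ≤ X.card := Finset.card_le_card hsub
      _ ≤ i := by omega

lemma dj_le {j i : ℕ} (hj1 : 1 ≤ j)
    (d : ℕ → ℕ)
    (hd : ∀ j, d j = sInf {m : ℕ | ∃ X : Finset (Fin n), X.card = m ∧ r Xᶜ + j = k})
    (hji : j ≤ dlProfile C i) : d j ≤ i := by
  have hne : (Tset C i).Nonempty := ⟨0, zero_mem_Tset hF hCk i⟩
  have hK : dlProfile C i ∈ Tset C i := Nat.sSup_mem hne (Tset_bddAbove hF hCk i)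
  obtain ⟨D, ct, hDC, ⟨hDcard, _⟩, hctD, hsupp⟩ := hK
  have hctC : ct ∈ C := hDC hctD
  have h1 : D.card ≤ (agreeOn C (suppCode D ct)ᶜ ct).card :=
    Finset.card_le_card (subcode_subset_agree hDC hctD)
  rw [hDcard, fiber_card hF hCk hr _ ct hctC] at h1
  have h2 : dlProfile C i ≤ k - r (suppCode D ct)ᶜ := (Nat.pow_le_pow_iff_right hF).1 h1
  have h3 : r (suppCode D ct)ᶜ ≤ k := r_le_k hF hCk hr _
  have h4 : r (suppCode D ct)ᶜ ≤ k - j := by omega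
  have hjk : j ≤ k := by omega
  obtain ⟨X, hXY, hX⟩ := exists_exact hF hCk hr hj1 hjk (suppCode D ct) h4
  rw [hd]
  calc sInf {m : ℕ | ∃ X : Finset (Fin n), X.card = m ∧ r Xᶜ + j = k}
      ≤ X.card := Nat.sInf_le ⟨X, rfl, hX⟩
    _ ≤ (suppCode D ct).card := Finset.card_le_card hXY
    _ ≤ i := hsupp

end Chunk3

/-- the generalized Hamming weights
`d_j(C) = min{|X| : r(E∖X) + j = k}` and the dimension/length profile `k_i(C)` are
inverse to each other: `d_j(C) = min{i : k_i(C) ≥ j}` and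
`k_i(C) = max{1 ≤ j ≤ k : d_j(C) ≤ i}`. -/
theorem hamming_weights_vs_dlProfile
    {F : Type*} [Fintype F] [DecidableEq F] (hF : 1 < Fintype.card F)
    {n k : ℕ} (C : Finset (Fin n → F)) (hC : IsAlmostAffineCode n k C)
    (r : Finset (Fin n) → ℕ)
    (hr : ∀ X : Finset (Fin n), (projC C X).card = Fintype.card F ^ r X)
    (d : ℕ → ℕ)
    (hd : ∀ j, d j = sInf {m : ℕ | ∃ X : Finset (Fin n), X.card = m ∧ r Xᶜ + j = k})
    (j i : ℕ) (hj1 : 1 ≤ j) (hjk : j ≤ k) (hi1 : 1 ≤ i) (hin : i ≤ n) :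
    d j = sInf {i' : ℕ | j ≤ dlProfile C i'} ∧
    dlProfile C i = sSup {j' : ℕ | 1 ≤ j' ∧ j' ≤ k ∧ d j' ≤ i} := by
  obtain ⟨hCk, -⟩ := hC
  have hA : ∀ j', 1 ≤ j' → j' ≤ k → j' ≤ dlProfile C (d j') := fun j' h1 h2 =>
    le_csSup (Tset_bddAbove hF hCk _) (j_mem_Tset hF hCk hr h1 h2 d hd le_rfl)
  constructor
  · apply le_antisymm
    · exact le_csInf ⟨d j, hA j hj1 hjk⟩ (fun b hb => dj_le hF hCk hr hj1 d hd hb)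
    · exact Nat.sInf_le (hA j hj1 hjk)
  · apply le_antisymm
    · rcases Nat.eq_zero_or_pos (dlProfile C i) with h0 | hpos
      · rw [h0]; exact Nat.zero_le _
      · have hKS : dlProfile C i ∈ {j' : ℕ | 1 ≤ j' ∧ j' ≤ k ∧ d j' ≤ i} := by
          refine ⟨hpos, ?_, dj_le hF hCk hr hpos d hd le_rfl⟩
          exact Tset_bdd hF hCk i _
            (Nat.sSup_mem ⟨0, zero_mem_Tset hF hCk i⟩ (Tset_bddAbove hF hCk i))
        exact le_csSup ⟨k, fun j' hj' => hj'.2.1⟩ hKS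
    · rcases Set.eq_empty_or_nonempty {j' : ℕ | 1 ≤ j' ∧ j' ≤ k ∧ d j' ≤ i} with hS | hS
      · rw [hS, csSup_empty]; exact bot_le
      · apply csSup_le hS
        rintro j' ⟨h1, h2, h3⟩
        exact (hA j' h1 h2).trans (dlProfile_mono hF hCk h3)
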